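/- Let p be a prime. Malle's modified probability weights Q(r) = p^{-(r²+r)/2} · (η_∞(p)/η_∞(p²)) · ∏_{k=1}^{r} (1 - p^{-k})^{-1}, with η_∞(x) = ∏_{k≥1}(1 - x^{-k}), satisfy ∑_{r=0}^{∞} Q(r) = 1. -/

import Mathlib

/-!
With `q = 1/p`, the weights are `Q(r) = q^{r(r+1)/2} / ((q;q)_r · ∏_{k≥1} (1 + q^k))`, because
`η_∞(p²) = ∏ (1 - q^k)(1 + q^k)`. So the claim is Euler's identity
`∑_r q^{r(r+1)/2} / (q;q)_r = ∏_{k≥1} (1 + q^k)`. For this, `F(z) = ∑_r q^{r(r+1)/2} z^r / (q;q)_r`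
satisfies `F(z) = (1 + qz) F(qz)`; iterating gives `F(1) = ∏_{k≤N} (1 + q^k) · F(q^N)`, and
`F(q^N) → F(0) = 1` by dominated convergence.
-/

open Finset Filter Topology

noncomputable section

def qPochhammer (q : ℝ) (n : ℕ) : ℝ := ∏ k ∈ range n, (1 - q ^ (k + 1))

def eulerCoeff (q : ℝ) (n : ℕ) : ℝ := q ^ ((n ^ 2 + n) / 2) / qPochhammer q n

def eulerSeries (q z : ℝ) : ℝ := ∑' n, eulerCoeff q n * z ^ n

end

lemma triangle_succ (n : ℕ) : ((n + 1) ^ 2 + (n + 1)) / 2 = (n ^ 2 + n) / 2 + (n + 1) := by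
  rw [show (n + 1) ^ 2 + (n + 1) = n ^ 2 + n + 2 * (n + 1) by ring,
    Nat.add_mul_div_left _ _ two_pos]

lemma le_triangle (n : ℕ) : n ≤ (n ^ 2 + n) / 2 := by
  have := Nat.le_self_pow two_ne_zero n
  omega

lemma qPochhammer_succ (q : ℝ) (n : ℕ) :
    qPochhammer q (n + 1) = qPochhammer q n * (1 - q ^ (n + 1)) :=
  prod_range_succ _ _

lemma qPochhammer_eq_prod_Icc (q : ℝ) (n : ℕ) :
    qPochhammer q n = ∏ k ∈ Icc 1 n, (1 - q ^ k) := by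
  rw [qPochhammer, range_eq_Ico, prod_Ico_add' (fun k => 1 - q ^ k)]
  rfl

lemma tprod_one_add_pos {ι : Type*} {f : ι → ℝ} (hpos : ∀ i, 0 < 1 + f i) (hf : Summable f) :
    0 < ∏' i, (1 + f i) :=
  (tprod_nonneg fun i => (hpos i).le).lt_of_ne'
    (tprod_one_add_ne_zero_of_summable (fun i => (hpos i).ne') hf.abs)

section

variable {q : ℝ} (hq0 : 0 ≤ q) (hq1 : q < 1)
include hq0 hq1

lemma summable_pow_succ : Summable fun k : ℕ => q ^ (k + 1) :=
  (summable_nat_add_iff 1).2 (summable_geometric_of_lt_one hq0 hq1)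

lemma one_sub_pow_succ_pos (k : ℕ) : 0 < 1 - q ^ (k + 1) :=
  sub_pos.2 (pow_lt_one₀ hq0 hq1 k.succ_ne_zero)

lemma multipliable_one_sub_pow_succ : Multipliable fun k : ℕ => 1 - q ^ (k + 1) := by
  simpa only [sub_eq_add_neg] using
    Real.multipliable_one_add_of_summable (summable_pow_succ hq0 hq1).neg

lemma multipliable_one_add_pow_succ : Multipliable fun k : ℕ => 1 + q ^ (k + 1) :=
  Real.multipliable_one_add_of_summable (summable_pow_succ hq0 hq1)

lemma tprod_one_sub_pow_succ_pos : 0 < ∏' k : ℕ, (1 - q ^ (k + 1)) := by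
  simpa only [sub_eq_add_neg] using
    tprod_one_add_pos (by simpa only [← sub_eq_add_neg] using one_sub_pow_succ_pos hq0 hq1)
      (summable_pow_succ hq0 hq1).neg

lemma tprod_one_add_pow_succ_pos : 0 < ∏' k : ℕ, (1 + q ^ (k + 1)) :=
  tprod_one_add_pos (fun _ => by positivity) (summable_pow_succ hq0 hq1)

lemma tprod_one_sub_sq_pow_succ :
    ∏' k : ℕ, (1 - (q ^ 2) ^ (k + 1)) =
      (∏' k : ℕ, (1 - q ^ (k + 1))) * ∏' k : ℕ, (1 + q ^ (k + 1)) := by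
  rw [← (multipliable_one_sub_pow_succ hq0 hq1).tprod_mul (multipliable_one_add_pow_succ hq0 hq1)]
  exact tprod_congr fun k => by ring

lemma qPochhammer_pos (n : ℕ) : 0 < qPochhammer q n :=
  prod_pos fun k _ => one_sub_pow_succ_pos hq0 hq1 k

lemma tprod_one_sub_pow_succ_le_qPochhammer (n : ℕ) :
    ∏' k : ℕ, (1 - q ^ (k + 1)) ≤ qPochhammer q n := by
  refine Antitone.le_of_tendsto (f := qPochhammer q) (antitone_nat_of_succ_le fun m => ?_)
    (multipliable_one_sub_pow_succ hq0 hq1).hasProd.tendsto_prod_nat n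
  rw [qPochhammer_succ]
  exact mul_le_of_le_one_right (qPochhammer_pos hq0 hq1 m).le (sub_le_self _ (by positivity))

lemma eulerCoeff_nonneg (n : ℕ) : 0 ≤ eulerCoeff q n :=
  div_nonneg (pow_nonneg hq0 _) (qPochhammer_pos hq0 hq1 n).le

lemma summable_eulerCoeff : Summable (eulerCoeff q) := by
  refine .of_nonneg_of_le (eulerCoeff_nonneg hq0 hq1) (fun n => ?_)
    ((summable_geometric_of_lt_one hq0 hq1).div_const (∏' k : ℕ, (1 - q ^ (k + 1))))
  exact div_le_div₀ (pow_nonneg hq0 n) (pow_le_pow_of_le_one hq0 hq1.le (le_triangle n))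
    (tprod_one_sub_pow_succ_pos hq0 hq1) (tprod_one_sub_pow_succ_le_qPochhammer hq0 hq1 n)

lemma eulerCoeff_succ_mul (n : ℕ) :
    eulerCoeff q (n + 1) * (1 - q ^ (n + 1)) = q ^ (n + 1) * eulerCoeff q n := by
  have := (qPochhammer_pos hq0 hq1 n).ne'
  have := (one_sub_pow_succ_pos hq0 hq1 n).ne'
  rw [eulerCoeff, eulerCoeff, triangle_succ, qPochhammer_succ, pow_add]
  field_simp

lemma summable_eulerCoeff_mul_pow {z : ℝ} (hz : |z| ≤ 1) :
    Summable fun n => eulerCoeff q n * z ^ n := by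
  refine (summable_eulerCoeff hq0 hq1).of_norm_bounded fun n => ?_
  rw [norm_mul, norm_pow, Real.norm_of_nonneg (eulerCoeff_nonneg hq0 hq1 n)]
  exact mul_le_of_le_one_right (eulerCoeff_nonneg hq0 hq1 n) (pow_le_one₀ (norm_nonneg z) hz)

lemma eulerSeries_eq_mul {z : ℝ} (hz : |z| ≤ 1) :
    eulerSeries q z = (1 + q * z) * eulerSeries q (q * z) := by
  have hqz : |q * z| ≤ 1 := by
    rw [abs_mul, abs_of_nonneg hq0]
    exact mul_le_one₀ hq1.le (abs_nonneg z) hz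
  -- termwise, `F(z) - F(qz)` is `qz F(qz)` shifted by one index
  have hdiff : HasSum (fun n => eulerCoeff q n * z ^ n - eulerCoeff q n * (q * z) ^ n)
      (q * z * eulerSeries q (q * z)) := by
    refine (hasSum_nat_add_iff' 1).1 ?_
    simp only [range_one, sum_singleton, pow_zero, sub_self, sub_zero]
    refine ((summable_eulerCoeff_mul_pow hq0 hq1 hqz).hasSum.mul_left (q * z)).congr_fun
      fun n => ?_
    linear_combination z ^ (n + 1) * eulerCoeff_succ_mul hq0 hq1 n
  have := (summable_eulerCoeff_mul_pow hq0 hq1 hz).hasSum.sub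
    (summable_eulerCoeff_mul_pow hq0 hq1 hqz).hasSum |>.unique hdiff
  unfold eulerSeries at this ⊢
  linarith

lemma eulerSeries_one_eq_prod_mul (N : ℕ) :
    eulerSeries q 1 = (∏ k ∈ range N, (1 + q ^ (k + 1))) * eulerSeries q (q ^ N) := by
  induction N with
  | zero => simp
  | succ n ih =>
    rw [ih, eulerSeries_eq_mul hq0 hq1 (z := q ^ n), prod_range_succ, ← pow_succ']
    · ring
    · rw [abs_of_nonneg (pow_nonneg hq0 n)]
      exact pow_le_one₀ hq0 hq1.le

lemma tendsto_eulerSeries_pow : Tendsto (fun N => eulerSeries q (q ^ N)) atTop (𝓝 1) := by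
  have hlim : ∑' n, eulerCoeff q n * 0 ^ n = 1 := by
    rw [tsum_eq_single 0 fun n hn => by simp [hn]]
    simp [eulerCoeff, qPochhammer]
  rw [← hlim]
  refine tendsto_tsum_of_dominated_convergence (summable_eulerCoeff hq0 hq1)
    (fun n => ((tendsto_pow_atTop_nhds_zero_of_lt_one hq0 hq1).pow n).const_mul _)
    (.of_forall fun N n => ?_)
  rw [norm_mul, norm_pow, Real.norm_of_nonneg (eulerCoeff_nonneg hq0 hq1 n)]
  refine mul_le_of_le_one_right (eulerCoeff_nonneg hq0 hq1 n) (pow_le_one₀ (norm_nonneg _) ?_)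
  rw [Real.norm_of_nonneg (pow_nonneg hq0 N)]
  exact pow_le_one₀ hq0 hq1.le

theorem hasSum_eulerCoeff : HasSum (eulerCoeff q) (∏' k : ℕ, (1 + q ^ (k + 1))) := by
  have hlim := (multipliable_one_add_pow_succ hq0 hq1).hasProd.tendsto_prod_nat.mul
    (tendsto_eulerSeries_pow hq0 hq1)
  simp only [← eulerSeries_one_eq_prod_mul hq0 hq1, mul_one] at hlim
  rw [← tendsto_nhds_unique tendsto_const_nhds hlim]
  simpa only [eulerSeries, one_pow, mul_one] using (summable_eulerCoeff hq0 hq1).hasSum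

theorem hasSum_malle_weights :
    HasSum (fun r => q ^ ((r ^ 2 + r) / 2) *
      ((∏' k : ℕ, (1 - q ^ (k + 1))) / ∏' k : ℕ, (1 - (q ^ 2) ^ (k + 1))) *
      (qPochhammer q r)⁻¹) 1 := by
  have hA := (tprod_one_sub_pow_succ_pos hq0 hq1).ne'
  have hP := (tprod_one_add_pow_succ_pos hq0 hq1).ne'
  have := (hasSum_eulerCoeff hq0 hq1).div_const (∏' k : ℕ, (1 + q ^ (k + 1)))
  rw [div_self hP] at this
  refine this.congr_fun fun r => ?_
  rw [tprod_one_sub_sq_pow_succ hq0 hq1, eulerCoeff]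
  field_simp

end

/-- Malle's modified probability weights
`Q(r) = p^{-(r²+r)/2} · (η_∞(p)/η_∞(p²)) · ∏_{k=1}^{r} (1 - p^{-k})^{-1}`, where
`η_∞(x) = ∏_{k≥1}(1 - x^{-k})`, sum to 1 over all `r ≥ 0`.  Note `(r²+r)/2` is
exact since `r² + r` is even. -/
theorem malle_weights_sum (p : ℕ) (hp : p.Prime) :
    ∑' r : ℕ, ((p : ℝ) ^ (-(((r ^ 2 + r) / 2 : ℕ) : ℤ)) *
      ((∏' k : ℕ, (1 - (p : ℝ) ^ (-((k : ℤ) + 1)))) /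
       (∏' k : ℕ, (1 - ((p : ℝ) ^ 2) ^ (-((k : ℤ) + 1))))) *
      ∏ k ∈ Finset.Icc 1 r, (1 - (p : ℝ) ^ (-(k : ℤ)))⁻¹) = 1 := by
  have hp1 : (1 : ℝ) < p := by exact_mod_cast hp.one_lt
  have hq1 : (p : ℝ)⁻¹ < 1 := inv_lt_one_of_one_lt₀ hp1
  convert (hasSum_malle_weights (inv_nonneg.2 (zero_le_one.trans hp1.le)) hq1).tsum_eq using 3
    with r
  rw [qPochhammer_eq_prod_Icc, ← prod_inv_distrib]
  simp only [← inv_zpow', ← Nat.cast_add_one, zpow_natCast, inv_pow]
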